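/- Let n ≥ 3 be a natural number and let C be an equitable proper coloring of the closed helm graph CH_n that uses exactly 4 colors, with colors indexed so that the class sizes are non-increasing. Then the equitable coloring variance of C equals (5n^2+7n)/(2n+1)^2 if n is even, and (5n^2+3n−2)/(2n+1)^2 if n is odd. -/

import Mathlib

open Finset

/-- The size of the color class of color `i` under the coloring `c`. -/
def classSize {V : Type*} [Fintype V] {k : ℕ} (c : V → Fin k) (i : Fin k) : ℕ :=
  (Finset.univ.filter (fun v => c v = i)).card

/-- The equitable coloring mean `μ = (∑ i·θ_i)/N` (colors indexed `1,…,k`). -/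
def eqMean {V : Type*} [Fintype V] {k : ℕ} (c : V → Fin k) : ℚ :=
  (∑ i : Fin k, (((i : ℕ) : ℚ) + 1) * (classSize c i : ℚ)) / (Fintype.card V : ℚ)

/-- The equitable coloring variance `σ² = (∑ i²·θ_i)/N − μ²`. -/
def eqVar {V : Type*} [Fintype V] {k : ℕ} (c : V → Fin k) : ℚ :=
  (∑ i : Fin k, (((i : ℕ) : ℚ) + 1) ^ 2 * (classSize c i : ℚ)) / (Fintype.card V : ℚ)
    - (eqMean c) ^ 2

/-- The closed helm graph `CH_n`: the helm graph together with the outer cycle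
on the (formerly pendant) vertices `u_i`. -/
def closedHelmGraph (n : ℕ) : SimpleGraph (Option (Fin n ⊕ Fin n)) :=
  SimpleGraph.fromRel (fun a b =>
    match a, b with
    | none, some (Sum.inl _) => True
    | some (Sum.inl i), some (Sum.inl j) => j.val = (i.val + 1) % n
    | some (Sum.inl i), some (Sum.inr j) => i = j
    | some (Sum.inr i), some (Sum.inr j) => j.val = (i.val + 1) % n
    | _, _ => False)

/- The sorted class sizes of an equitable coloring are determined by `N` and `k`: if
`θ₀ ≥ θ₁ ≥ ⋯ ≥ θ_{k-1}` differ pairwise by at most one and sum to `N`, comparing every `θⱼ`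
with a fixed `θᵢ` gives `k θᵢ - (k - 1 - i) ≤ N ≤ k θᵢ + i`, i.e. `θᵢ = ⌊(N + k - 1 - i) / k⌋`.
For `CH_n` we have `N = 2n + 1` and `k = 4`, so the class sizes are `(m + 1, m, m, m)` for
`n = 2m` and `(m + 1, m + 1, m + 1, m)` for `n = 2m + 1`; the variance is then a direct
computation. -/

theorem Antitone.apply_eq_div_of_le_add_one {k : ℕ} {θ : Fin k → ℕ} (hθ : Antitone θ)
    (hbal : ∀ i j, θ i ≤ θ j + 1) (i : Fin k) :
    θ i = (∑ j, θ j + (k - 1 - i)) / k := by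
  have hupper : ∑ j, θ j ≤ k * θ i + i :=
    calc ∑ j, θ j ≤ ∑ j, (θ i + if j < i then 1 else 0) := by
          gcongr with j
          split_ifs with h
          · exact hbal j i
          · exact hθ (not_lt.mp h)
      _ = k * θ i + i := by
          rw [sum_add_distrib, sum_boole, filter_gt_eq_Iio, Fin.card_Iio]
          simp
  have hlower : k * θ i ≤ ∑ j, θ j + (k - 1 - i) :=
    calc k * θ i = ∑ _j : Fin k, θ i := by simp
      _ ≤ ∑ j, (θ j + if i < j then 1 else 0) := by
          gcongr with j
          split_ifs with h
          · exact hbal i j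
          · simpa using hθ (not_lt.mp h)
      _ = ∑ j, θ j + (k - 1 - i) := by
          rw [sum_add_distrib, sum_boole, filter_lt_eq_Ioi, Fin.card_Ioi]
          simp
  refine (Nat.div_eq_of_lt_le ?_ ?_).symm
  · rwa [mul_comm]
  · rw [Nat.succ_mul, mul_comm]
    have := i.pos
    omega

theorem sum_classSize {V : Type*} [Fintype V] {k : ℕ} (c : V → Fin k) :
    ∑ i, classSize c i = Fintype.card V := by
  classical
  rw [← card_univ, card_eq_sum_card_fiberwise fun v _ => mem_univ (c v)]
  rfl

theorem classSize_eq_div {V : Type*} [Fintype V] {k : ℕ} {c : V → Fin k}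
    (hmono : Antitone (classSize c)) (hequit : ∀ i j, classSize c i ≤ classSize c j + 1)
    (i : Fin k) : classSize c i = (Fintype.card V + (k - 1 - i)) / k := by
  rw [← sum_classSize c]
  exact hmono.apply_eq_div_of_le_add_one hequit i

theorem eqVar_fin_four {V : Type*} [Fintype V] (c : V → Fin 4) :
    eqVar c = (classSize c 0 + 4 * classSize c 1 + 9 * classSize c 2 + 16 * classSize c 3 : ℚ)
        / Fintype.card V
      - ((classSize c 0 + 2 * classSize c 1 + 3 * classSize c 2 + 4 * classSize c 3 : ℚ)
        / Fintype.card V) ^ 2 := by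
  simp only [eqVar, eqMean, Fin.sum_univ_four]
  norm_num

theorem card_closedHelm_vertices (n : ℕ) : Fintype.card (Option (Fin n ⊕ Fin n)) = 2 * n + 1 := by
  simp [Fintype.card_sum]
  ring

theorem closedHelm_eqVar_general (n : ℕ)
    (c : Option (Fin n ⊕ Fin n) → Fin (4))
    (hequit : ∀ i j : Fin (4), classSize c i ≤ classSize c j + 1)
    (hmono : ∀ i j : Fin (4), i ≤ j → classSize c j ≤ classSize c i) :
    eqVar c = if Even n then (5 * (n : ℚ) ^ 2 + 7 * (n : ℚ)) / (2 * (n : ℚ) + 1) ^ 2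
      else (5 * (n : ℚ) ^ 2 + 3 * (n : ℚ) - 2) / (2 * (n : ℚ) + 1) ^ 2 := by
  have hsize (i : Fin 4) : classSize c i = (2 * n + 1 + (3 - i)) / 4 := by
    rw [classSize_eq_div (fun i j h => hmono i j h) hequit, card_closedHelm_vertices]
  rw [eqVar_fin_four, card_closedHelm_vertices]
  rcases Nat.even_or_odd' n with ⟨m, rfl | rfl⟩
  · obtain ⟨h0, h1, h2, h3⟩ : classSize c 0 = m + 1 ∧ classSize c 1 = m ∧
        classSize c 2 = m ∧ classSize c 3 = m := by
      simp [hsize]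
      omega
    rw [if_pos (even_two_mul m), h0, h1, h2, h3]
    push_cast
    field_simp
    ring
  · obtain ⟨h0, h1, h2, h3⟩ : classSize c 0 = m + 1 ∧ classSize c 1 = m + 1 ∧
        classSize c 2 = m + 1 ∧ classSize c 3 = m := by
      simp [hsize]
      omega
    rw [if_neg (Nat.not_even_two_mul_add_one m), h0, h1, h2, h3]
    push_cast
    field_simp
    ring

theorem closedHelm_eqVar (n : ℕ) (hn : 3 ≤ n)
    (c : Option (Fin n ⊕ Fin n) → Fin (4))
    (hproper : ∀ u v, (closedHelmGraph n).Adj u v → c u ≠ c v)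
    (hsurj : Function.Surjective c)
    (hequit : ∀ i j : Fin (4), classSize c i ≤ classSize c j + 1)
    (hmono : ∀ i j : Fin (4), i ≤ j → classSize c j ≤ classSize c i) :
    eqVar c = if Even n then (5 * (n : ℚ) ^ 2 + 7 * (n : ℚ)) / (2 * (n : ℚ) + 1) ^ 2
      else (5 * (n : ℚ) ^ 2 + 3 * (n : ℚ) - 2) / (2 * (n : ℚ) + 1) ^ 2 :=
  closedHelm_eqVar_general n c hequit hmono
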